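/- arXiv:2310.05452 — 4 statements merged into one kernel-verified Lean document; each statement's English description precedes it below -/
import Mathlib

section
/- Let (M, cl) be a template-content (T-C) model over a token type τ. Let p be a prompt, q and q' questions with |q| = |q'|, a' an answer sequence, and a₁…a_t a partial answer with t ≤ |a'| such that the sequences p++q++(a₁…a_t) and p++q'++(a'₁…a'_t) are T/C-aligned and have the same template. Suppose M remembers the training sample (p, q', a'). Define tokens a_j for t < j ≤ |a'| autoregressively by a_j = M(p++q++(a₁…a_{j-1})). Then the full sequences p++q++(a₁…a_{|a'|}) and p++q'++a' are T/C-aligned and have the same template; in particular a_j = a'_j for every position j ≤ |a'| whose class is T. -/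
/-- The two classes of tokens: template (`T`) or content (`C`). -/
inductive TCClass where
  | T : TCClass
  | C : TCClass

/-- Two equal-length sequences are T/C-aligned: every position has the same class,
where the class of position `i` is `cl` applied to the length-`i` prefix. -/
def Aligned {τ : Type*} (cl : List τ → TCClass) (x y : List τ) : Prop :=
  x.length = y.length ∧ ∀ i : ℕ, cl (x.take i) = cl (y.take i)

/-- Two sequences have the same template: they are T/C-aligned and agree
at every position whose class is `T`. -/
def SameTemplate {τ : Type*} (cl : List τ → TCClass) (x y : List τ) : Prop :=
  Aligned cl x y ∧
    ∀ (i : ℕ) (hx : i < x.length) (hy : i < y.length),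
      cl (x.take (i + 1)) = TCClass.T → x[i] = y[i]

/-- `(M, cl)` is a template-content (T-C) model. -/
def IsTCModel {τ : Type*} (M : List τ → τ) (cl : List τ → TCClass) : Prop :=
  ∀ p q q' a a' : List τ, q.length = q'.length → a.length = a'.length →
    SameTemplate cl (p ++ q ++ a) (p ++ q' ++ a') →
      cl ((p ++ q ++ a) ++ [M (p ++ q ++ a)]) =
          cl ((p ++ q' ++ a') ++ [M (p ++ q' ++ a')]) ∧
        (cl ((p ++ q ++ a) ++ [M (p ++ q ++ a)]) = TCClass.T →
          M (p ++ q ++ a) = M (p ++ q' ++ a'))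

/-- The `m`-step autoregressive extension of a sequence under `M`:
repeatedly append the model's next token, `m` times. -/
def autoregExtend {τ : Type*} (M : List τ → τ) (x : List τ) : ℕ → List τ
  | 0 => x
  | m + 1 => autoregExtend M x m ++ [M (autoregExtend M x m)]

/-- `M` remembers the training sample `(p, q', a')`: given the prompt, the
question and any proper prefix of the answer, it generates the next answer token. -/
def Remembers {τ : Type*} (M : List τ → τ) (p q' a' : List τ) : Prop :=
  ∀ (s : ℕ) (hs : s < a'.length), M (p ++ q' ++ a'.take s) = a'[s]

/-- Within-task generalization: if the partial sequence `p ++ q ++ a` (with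
`|a| = t ≤ |a'|`) is T/C-aligned with `p ++ q' ++ (a'₁…a'_t)` and has the same
template, and `M` remembers the training sample `(p, q', a')`, then the full
sequence generated autoregressively from `p ++ q ++ a` (for `|a'| - t` further
steps) is T/C-aligned with `p ++ q' ++ a'` and has the same template; in
particular the generated tokens agree with `a'` at every template position. -/
theorem within_task_generalization {τ : Type*} (M : List τ → τ) (cl : List τ → TCClass)
    (hM : IsTCModel M cl)
    (p q q' a a' : List τ) (t : ℕ)
    (hq : q.length = q'.length)
    (hat : a.length = t) (hta' : t ≤ a'.length)
    (hst : SameTemplate cl (p ++ q ++ a) (p ++ q' ++ a'.take t))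
    (hrem : Remembers M p q' a') :
    SameTemplate cl (autoregExtend M (p ++ q ++ a) (a'.length - t)) (p ++ q' ++ a') := by
  have key : ∀ m, t + m ≤ a'.length → ∃ b : List τ,
      autoregExtend M (p ++ q ++ a) m = p ++ q ++ b ∧ b.length = t + m ∧
      SameTemplate cl (p ++ q ++ b) (p ++ q' ++ a'.take (t + m)) := by
    intro m
    induction m with
    | zero =>
      intro _
      exact ⟨a, rfl, by omega, hst⟩
    | succ m ih =>
      intro hle
      obtain ⟨b, hb, hblen, hstm⟩ := ih (by omega)
      have htm : t + m < a'.length := by omega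
      have hblen' : b.length = (a'.take (t + m)).length := by
        simp [hblen]; omega
      obtain ⟨h1, h2⟩ := hM p q q' b (a'.take (t + m)) hq hblen' hstm
      have hrem' : M (p ++ q' ++ a'.take (t + m)) = a'[t + m] := hrem (t + m) htm
      set x := p ++ q ++ b with hx
      set y := p ++ q' ++ a'.take (t + m) with hy
      have hLxy : x.length = y.length := hstm.1.1
      have hxnew : p ++ q ++ (b ++ [M x]) = x ++ [M x] := by
        simp [hx, List.append_assoc]
      have htk : a'.take (t + m + 1) = a'.take (t + m) ++ [a'[t + m]] :=
        (List.take_concat_get' a' (t + m) htm).symm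
      have hynew : p ++ q' ++ a'.take (t + (m + 1)) = y ++ [a'[t + m]] := by
        show p ++ q' ++ a'.take (t + m + 1) = y ++ [a'[t + m]]
        rw [htk, hy, List.append_assoc, List.append_assoc, List.append_assoc]
      refine ⟨b ++ [M x], ?_, ?_, ⟨?_, ?_⟩, ?_⟩
      · rw [autoregExtend, hb, hxnew]
      · simp [hblen]; omega
      · rw [hxnew, hynew]; simp [hLxy]
      · intro i
        rw [hxnew, hynew]
        rcases le_or_gt i x.length with hi | hi
        · have hi2 : i ≤ y.length := hLxy ▸ hi
          rw [List.take_append_of_le_length hi,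
            List.take_append_of_le_length hi2]
          exact hstm.1.2 i
        · rw [List.take_of_length_le (by simp; omega),
            List.take_of_length_le (by simp; omega), ← hrem']
          exact h1
      · intro i hxi hyi hT
        simp only [hxnew] at hxi hT ⊢
        simp only [hynew] at hyi ⊢
        simp only [List.length_append, List.length_singleton] at hxi
        rcases lt_or_eq_of_le (Nat.lt_succ_iff.mp hxi) with hi | hi
        · have hi2 : i < y.length := hLxy ▸ hi
          rw [List.getElem_append_left hi, List.getElem_append_left hi2]
          rw [List.take_append_of_le_length (by omega)] at hT
          exact hstm.2 i hi hi2 hT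
        · subst hi
          have hxT : cl (x ++ [M x]) = TCClass.T := by
            rwa [List.take_of_length_le (by simp)] at hT
          simp only [hLxy, List.getElem_concat_length]
          rw [← hrem']
          exact h2 hxT
  obtain ⟨b, hb, hblen, hstm⟩ := key (a'.length - t) (by omega)
  have heq : t + (a'.length - t) = a'.length := by omega
  rw [heq, List.take_length] at hstm
  rw [hb]
  exact hstm
end

section
/- Let (M, cl) be a template-content (T-C) model over a token type τ. Let p be a prompt, q and q' questions with |q| = |q'|, and a, a' partial answers with |a| = |a'|, such that x = p++q++a and y = p++q'++a' are T/C-aligned and have the same template. For every m ≥ 0, the m-step autoregressive extensions of x and y (obtained by repeatedly appending M applied to the current sequence, m times) are T/C-aligned and have the same template. In particular, the template tokens generated autoregressively by M are independent of the content tokens of the input. -/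
lemma concat_same_template {τ : Type*} (cl : List τ → TCClass)
    (x y : List τ) (wx wy : τ)
    (hlen : x.length = y.length)
    (hcl : ∀ i : ℕ, cl (x.take i) = cl (y.take i))
    (htok : ∀ (i : ℕ) (hx : i < x.length) (hy : i < y.length),
      cl (x.take (i + 1)) = TCClass.T → x[i] = y[i])
    (h1 : cl (x ++ [wx]) = cl (y ++ [wy]))
    (h2 : cl (x ++ [wx]) = TCClass.T → wx = wy) :
    SameTemplate cl (x ++ [wx]) (y ++ [wy]) := by
  refine ⟨⟨by simp [hlen], ?_⟩, ?_⟩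
  · intro i
    rcases le_or_gt i x.length with hi | hi
    · rw [List.take_append_of_le_length hi,
        List.take_append_of_le_length (by omega : i ≤ y.length)]
      exact hcl i
    · have b1 : (x ++ [wx]).length ≤ i := by
        simp only [List.length_append, List.length_singleton]; omega
      have b2 : (y ++ [wy]).length ≤ i := by
        simp only [List.length_append, List.length_singleton]; omega
      rw [List.take_of_length_le b1, List.take_of_length_le b2]
      exact h1
  · intro i hix hiy hT
    simp only [List.length_append, List.length_singleton] at hix hiy
    rcases lt_or_eq_of_le (Nat.lt_succ_iff.mp hix) with hi | hi
    · rw [List.getElem_append_left hi, List.getElem_append_left (by omega)]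
      rw [List.take_append_of_le_length (by omega : i + 1 ≤ x.length)] at hT
      exact htok i hi (by omega) hT
    · subst hi
      rw [List.take_of_length_le (by simp)] at hT
      have hMxy := h2 hT
      have e1 : (x ++ [wx])[x.length]'(by simp) = wx := by simp
      have e2 : (y ++ [wy])[x.length]'(by simp; omega) = wy := by
        rw [List.getElem_append_right hlen.ge]
        simp
      rw [e1, e2, hMxy]

lemma tc_step {τ : Type*} (M : List τ → τ) (cl : List τ → TCClass)
    (hM : IsTCModel M cl) (p q q' A A' : List τ)
    (hq : q.length = q'.length) (hA : A.length = A'.length)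
    (h : SameTemplate cl (p ++ q ++ A) (p ++ q' ++ A')) :
    SameTemplate cl ((p ++ q ++ A) ++ [M (p ++ q ++ A)])
      ((p ++ q' ++ A') ++ [M (p ++ q' ++ A')]) := by
  obtain ⟨⟨hlen, hcl⟩, htok⟩ := h
  obtain ⟨h1, h2⟩ := hM p q q' A A' hq hA ⟨⟨hlen, hcl⟩, htok⟩
  exact concat_same_template cl _ _ _ _ hlen hcl htok h1 h2

/-- For a T-C model, the `m`-step autoregressive extensions of two T/C-aligned,
same-template sequences are again T/C-aligned with the same template:
the template tokens generated autoregressively are independent of the content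
tokens of the input. -/
theorem tc_autoreg_same_template {τ : Type*} (M : List τ → τ) (cl : List τ → TCClass)
    (hM : IsTCModel M cl)
    (p q q' a a' : List τ)
    (hq : q.length = q'.length) (ha : a.length = a'.length)
    (hst : SameTemplate cl (p ++ q ++ a) (p ++ q' ++ a')) :
    ∀ m : ℕ, SameTemplate cl (autoregExtend M (p ++ q ++ a) m)
      (autoregExtend M (p ++ q' ++ a') m) := by
  have key : ∀ m : ℕ, ∃ b b' : List τ, b.length = b'.length ∧
      autoregExtend M (p ++ q ++ a) m = p ++ q ++ (a ++ b) ∧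
      autoregExtend M (p ++ q' ++ a') m = p ++ q' ++ (a' ++ b') := by
    intro m
    induction m with
    | zero => exact ⟨[], [], rfl, by simp [autoregExtend], by simp [autoregExtend]⟩
    | succ n ih =>
      obtain ⟨b, b', hb, e1, e2⟩ := ih
      exact ⟨b ++ [M (autoregExtend M (p ++ q ++ a) n)],
        b' ++ [M (autoregExtend M (p ++ q' ++ a') n)],
        by simp [hb],
        by show autoregExtend M (p ++ q ++ a) n ++ _ = _; rw [e1]; simp,
        by show autoregExtend M (p ++ q' ++ a') n ++ _ = _; rw [e2]; simp⟩
  intro m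
  induction m with
  | zero => exact hst
  | succ n ih =>
    obtain ⟨b, b', hb, e1, e2⟩ := key n
    have hab : (a ++ b).length = (a' ++ b').length := by simp [ha, hb]
    have := tc_step M cl hM p q q' (a ++ b) (a' ++ b') hq hab (by rwa [← e1, ← e2])
    rw [← e1, ← e2] at this
    exact this
end

section
/- Let d, n be natural numbers with d ≥ 2 and let δ be a real number with 0 < δ ≤ 1/2. Let c₀, …, c_n and c'₀, …, c'_n be real numbers such that for every 0 ≤ i ≤ n: |c_i| ≤ δ^{-d} − 1, |c'_i| ≤ δ^{-d} − 1, and either c_i = c'_i or |c_i − c'_i| ≥ δ. If ∑_{i=0}^{n} δ^{-2id} (c_i − c'_i) = 0, then c_i = c'_i for all 0 ≤ i ≤ n. -/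
/-- Auxiliary induction: with base `B = A^2`, bounded δ-separated digits and a
vanishing weighted sum force all digits to agree. -/
lemma separation_aux (δ A : ℝ) (hδ0 : 0 < δ) (hA4 : 4 ≤ A) (hδA : 2 ≤ δ * A)
    (c c' : ℕ → ℝ) :
    ∀ n : ℕ, (∀ i ≤ n, |c i| ≤ A - 1) → (∀ i ≤ n, |c' i| ≤ A - 1) →
      (∀ i ≤ n, c i = c' i ∨ δ ≤ |c i - c' i|) →
      (∑ i ∈ Finset.range (n + 1), (A ^ 2) ^ i * (c i - c' i) = 0) →
      ∀ i ≤ n, c i = c' i := by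
  intro n
  induction n with
  | zero =>
    intro _ _ _ hsum i hi
    interval_cases i
    have : c 0 - c' 0 = 0 := by simpa using hsum
    linarith
  | succ n ih =>
    intro hbound hbound' hsep hsum
    have hApos : (0 : ℝ) < A := by linarith
    have hBpos : (0 : ℝ) < A ^ 2 := by positivity
    rw [Finset.sum_range_succ] at hsum
    set S : ℝ := ∑ i ∈ Finset.range (n + 1), (A ^ 2) ^ i * (c i - c' i) with hS
    -- first: top digits agree
    have htop : c (n + 1) = c' (n + 1) := by
      by_contra hne
      have hsep' : δ ≤ |c (n + 1) - c' (n + 1)| := by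
        rcases hsep (n + 1) le_rfl with h | h
        · exact absurd h hne
        · exact h
      have heq : (A ^ 2) ^ (n + 1) * (c (n + 1) - c' (n + 1)) = -S := by linarith
      set G : ℝ := ∑ i ∈ Finset.range (n + 1), (A ^ 2) ^ i with hG
      have hGnonneg : 0 ≤ G := Finset.sum_nonneg fun i _ => by positivity
      have hgeom : G * (A ^ 2 - 1) = (A ^ 2) ^ (n + 1) - 1 := geom_sum_mul (A ^ 2) (n + 1)
      have habs : |S| ≤ G * (2 * (A - 1)) := by
        calc |S| ≤ ∑ i ∈ Finset.range (n + 1), |(A ^ 2) ^ i * (c i - c' i)| :=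
              Finset.abs_sum_le_sum_abs _ _
          _ ≤ ∑ i ∈ Finset.range (n + 1), (A ^ 2) ^ i * (2 * (A - 1)) := by
              apply Finset.sum_le_sum
              intro i hi
              have hi' : i ≤ n + 1 := le_of_lt (by simpa using Finset.mem_range.mp hi)
              rw [abs_mul, abs_of_pos (by positivity : (0:ℝ) < (A ^ 2) ^ i)]
              apply mul_le_mul_of_nonneg_left _ (by positivity)
              have h1 := hbound i hi'
              have h2 := hbound' i hi'
              calc |c i - c' i| ≤ |c i| + |c' i| := abs_sub _ _
                _ ≤ 2 * (A - 1) := by linarith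
          _ = G * (2 * (A - 1)) := by rw [hG, ← Finset.sum_mul]
      have hmain : δ * (A ^ 2) ^ (n + 1) ≤ G * (2 * (A - 1)) := by
        calc δ * (A ^ 2) ^ (n + 1)
            ≤ |c (n + 1) - c' (n + 1)| * (A ^ 2) ^ (n + 1) := by
              apply mul_le_mul_of_nonneg_right hsep' (by positivity)
          _ = |(A ^ 2) ^ (n + 1) * (c (n + 1) - c' (n + 1))| := by
              rw [abs_mul, abs_of_pos (by positivity : (0:ℝ) < (A ^ 2) ^ (n + 1))]
              ring
          _ = |S| := by rw [heq, abs_neg]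
          _ ≤ G * (2 * (A - 1)) := habs
      -- contradiction
      have hBn : (0 : ℝ) < (A ^ 2) ^ (n + 1) := by positivity
      have h1 : δ * (A + 1) * (A ^ 2) ^ (n + 1) ≤ G * (2 * (A - 1)) * (A + 1) := by
        have := mul_le_mul_of_nonneg_right hmain (by linarith : (0:ℝ) ≤ A + 1)
        linarith [this]
      have h2 : G * (2 * (A - 1)) * (A + 1) = 2 * ((A ^ 2) ^ (n + 1) - 1) := by
        have : G * (2 * (A - 1)) * (A + 1) = 2 * (G * (A ^ 2 - 1)) := by ring
        rw [this, hgeom]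
      nlinarith [h1, h2, hBn, hδ0, hδA]
    -- now the rest
    have hsum' : S = 0 := by rw [htop] at hsum; simpa using hsum
    have hrest := ih (fun i hi => hbound i (le_trans hi (Nat.le_succ n)))
      (fun i hi => hbound' i (le_trans hi (Nat.le_succ n)))
      (fun i hi => hsep i (le_trans hi (Nat.le_succ n))) hsum'
    intro i hi
    rcases Nat.lt_or_ge i (n + 1) with h | h
    · exact hrest i (Nat.lt_succ_iff.mp h)
    · have : i = n + 1 := le_antisymm hi h
      rw [this]; exact htop

/-- Separation lemma: a vanishing weighted sum with weights `δ^(-2id)` (a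
base-`δ^(-2d)` expansion with digits bounded by `δ^(-d) - 1` and δ-separated)
forces all digits to agree. -/
theorem separation_lemma (d n : ℕ) (hd : 2 ≤ d) (δ : ℝ) (hδ0 : 0 < δ)
    (hδ : δ ≤ 1 / 2) (c c' : ℕ → ℝ)
    (hbound : ∀ i ≤ n, |c i| ≤ δ ^ (-(d : ℤ)) - 1)
    (hbound' : ∀ i ≤ n, |c' i| ≤ δ ^ (-(d : ℤ)) - 1)
    (hsep : ∀ i ≤ n, c i = c' i ∨ δ ≤ |c i - c' i|)
    (hsum : ∑ i ∈ Finset.range (n + 1), δ ^ (-(2 * (i : ℤ) * d)) * (c i - c' i) = 0) :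
    ∀ i ≤ n, c i = c' i := by
  set A : ℝ := δ ^ (-(d : ℤ)) with hA
  have hdpos : (0 : ℝ) < δ ^ d := pow_pos hδ0 d
  have hAeq : A = (δ ^ d)⁻¹ := by rw [hA, zpow_neg, zpow_natCast]
  have hδd : δ ^ d ≤ δ ^ 2 := pow_le_pow_of_le_one hδ0.le (by linarith) hd
  have hδ2 : δ ^ 2 ≤ 1 / 4 := by nlinarith
  have hinv : δ ^ d * (δ ^ d)⁻¹ = 1 := mul_inv_cancel₀ (ne_of_gt hdpos)
  have hinvpos : (0:ℝ) < (δ ^ d)⁻¹ := inv_pos.mpr hdpos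
  have hA4 : 4 ≤ A := by
    rw [hAeq]
    nlinarith [hinv, hinvpos, hδd, hδ2]
  have hδA : 2 ≤ δ * A := by
    rw [hAeq]
    have hδd2 : δ ^ d ≤ δ * (1/2) := by nlinarith
    nlinarith [hinv, hinvpos, hδd2, hδ0]
  have hw : ∀ i : ℕ, δ ^ (-(2 * (i : ℤ) * d)) = (A ^ 2) ^ i := by
    intro i
    rw [hA, show (-(2 * (i : ℤ) * d)) = (-(d : ℤ)) * 2 * i by ring,
      zpow_mul, zpow_mul, zpow_natCast, zpow_two]
    ring_nf
  rw [Finset.sum_congr rfl (fun i _ => by rw [hw i])] at hsum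
  exact separation_aux δ A hδ0 hA4 hδA c c' n hbound hbound' hsep hsum
end

section
/- Let τ be a type of tokens and fix n ≥ 1 levels. Let cl : List τ → {1, …, n} be a causal hierarchical classification (the class of position i of a sequence x is cl applied to the length-i prefix of x). Let M : List τ → τ be an autoregressive model admitting a hierarchical decomposition: there are a type X, functions f₁, …, f_n : List τ → X, and for each level k a function g_k : X^k → τ, such that (i) whenever cl(x++[M(x)]) = k one has M(x) = g_k(f₁(x), …, f_k(x)), and (ii) each f_k is level-k determined: f_k(x) = f_k(y) whenever x and y have equal length, the same position-wise classification, and the same tokens at every position of class k. Let a⁽¹⁾, …, a⁽ⁿ⁾ be sequences of common length L that are pairwise position-wise classification-aligned, and let the combined sequence â of length L be defined by taking at each position of class k the token of a⁽ᵏ⁾; assume â has the same position-wise classification as the samples. Fix t with 0 ≤ t < L and assume: (1) M remembers each sample from position t, i.e., M(a⁽ᵏ⁾₁…a⁽ᵏ⁾_s) = a⁽ᵏ⁾_{s+1} for every k and every t ≤ s < L; (2) label consistency holds, i.e., for every t ≤ s < L, letting k be the common class of position s+1: (a) cl((â₁…â_s)++[M(â₁…â_s)]) = cl((a⁽ᵏ⁾₁…a⁽ᵏ⁾_s)++[M(a⁽ᵏ⁾₁…a⁽ᵏ⁾_s)]),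 and (b) g_k(f₁(â₁…â_s), …, f_{k−1}(â₁…â_s), f_k(a⁽ᵏ⁾₁…a⁽ᵏ⁾_s)) = g_k(f₁(a⁽ᵏ⁾₁…a⁽ᵏ⁾_s), …, f_{k−1}(a⁽ᵏ⁾₁…a⁽ᵏ⁾_s), f_k(a⁽ᵏ⁾₁…a⁽ᵏ⁾_s)). Then M generates the combined sequence â autoregressively from its length-t prefix: M(â₁…â_s) = â_{s+1} for every t ≤ s < L. In particular, for each level k the generated answer has the same level-k tokens as the training sample a⁽ᵏ⁾. -/
/-- Hierarchical answer generation: a model with a hierarchical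
template-content decomposition that remembers `n` label-consistent training
samples `a 1, …, a n` (one providing each level of the template) generates the
combined sequence `ahat` (which takes its level-`k` tokens from the `k`-th
sample) autoregressively from its length-`t` prefix.

Levels are `{1, …, n}`; `cl x` is the level of the last token of the nonempty
sequence `x`, so the class of position `i` of `x` is `cl (x.take i)`
(positions are counted from `0` here, i.e. position `i` of the informal
statement corresponds to index `i - 1`). -/
theorem hierarchical_answer_generation
    {τ X : Type*} (n : ℕ) (hn : 1 ≤ n)
    -- causal hierarchical classification with levels in {1, …, n}
    (cl : List τ → ℕ)
    (hcl_range : ∀ x : List τ, 1 ≤ cl x ∧ cl x ≤ n)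
    (M : List τ → τ)
    (f : ℕ → List τ → X)
    (g : (k : ℕ) → (Fin k → X) → τ)
    -- (i) hierarchical decomposition: if the generated token has level k then
    -- M(x) = g_k(f₁(x), …, f_k(x))
    (hdecomp : ∀ (x : List τ) (k : ℕ), cl (x ++ [M x]) = k →
        M x = g k (fun j : Fin k => f (j.val + 1) x))
    -- (ii) each f_k is level-k determined
    (hdet : ∀ (k : ℕ) (x y : List τ), x.length = y.length →
        (∀ i : ℕ, cl (x.take i) = cl (y.take i)) →
        (∀ (i : ℕ) (hx : i < x.length) (hy : i < y.length),
            cl (x.take (i + 1)) = k → x[i] = y[i]) →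
        f k x = f k y)
    -- the n samples, of common length L, pairwise classification-aligned
    (L : ℕ) (a : ℕ → List τ)
    (hlen : ∀ k, 1 ≤ k → k ≤ n → (a k).length = L)
    (haligned : ∀ k k', 1 ≤ k → k ≤ n → 1 ≤ k' → k' ≤ n →
        ∀ i : ℕ, cl ((a k).take i) = cl ((a k').take i))
    -- the combined sequence ahat: same classification as the samples, and at
    -- each position of class k it carries the token of the k-th sample
    (ahat : List τ) (hhat_len : ahat.length = L)
    (hhat_aligned : ∀ k, 1 ≤ k → k ≤ n →
        ∀ i : ℕ, cl (ahat.take i) = cl ((a k).take i))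
    (hhat_def : ∀ (i : ℕ) (hi : i < ahat.length) (k : ℕ), 1 ≤ k → k ≤ n →
        cl (ahat.take (i + 1)) = k →
        ∀ (hik : i < (a k).length), ahat[i] = (a k)[i])
    (t : ℕ) (htL : t < L)
    -- (1) M remembers each sample from position t
    (hrem : ∀ k, 1 ≤ k → k ≤ n → ∀ s, t ≤ s → ∀ (hs : s < (a k).length),
        M ((a k).take s) = (a k)[s])
    -- (2a) label consistency: the class of the token generated from the prefix
    -- of ahat agrees with that generated from the prefix of the k-th sample,
    -- k being the common class of position s+1
    (hlabel_cl : ∀ s, t ≤ s → s < L → ∀ k, cl (ahat.take (s + 1)) = k →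
        cl (ahat.take s ++ [M (ahat.take s)])
          = cl ((a k).take s ++ [M ((a k).take s)]))
    -- (2b) label consistency:
    -- g_k(f₁(â₁…â_s), …, f_{k-1}(â₁…â_s), f_k(a⁽ᵏ⁾₁…a⁽ᵏ⁾_s))
    --   = g_k(f₁(a⁽ᵏ⁾₁…a⁽ᵏ⁾_s), …, f_k(a⁽ᵏ⁾₁…a⁽ᵏ⁾_s))
    (hlabel_g : ∀ s, t ≤ s → s < L → ∀ k, cl (ahat.take (s + 1)) = k →
        g k (fun j : Fin k =>
            if j.val + 1 = k then f k ((a k).take s)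
            else f (j.val + 1) (ahat.take s))
          = g k (fun j : Fin k => f (j.val + 1) ((a k).take s))) :
    -- conclusion: M generates ahat autoregressively from its length-t prefix
    ∀ s, t ≤ s → ∀ (hs : s < ahat.length), M (ahat.take s) = ahat[s] := by
  intro s hts hs
  have hsL : s < L := by rwa [hhat_len] at hs
  set k := cl (ahat.take (s + 1)) with hk
  obtain ⟨hk1, hkn⟩ := hcl_range (ahat.take (s + 1))
  have hak_len : (a k).length = L := hlen k hk1 hkn
  have hsak : s < (a k).length := by omega
  have hrem' : M ((a k).take s) = (a k)[s] := hrem k hk1 hkn s hts hsak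
  have htake : (a k).take s ++ [M ((a k).take s)] = (a k).take (s + 1) := by
    rw [hrem']
    simpa using List.take_concat_get _ _ hsak
  have hclak : cl ((a k).take (s + 1)) = k := (hhat_aligned k hk1 hkn (s + 1)).symm
  have hcl_hat : cl (ahat.take s ++ [M (ahat.take s)]) = k := by
    rw [hlabel_cl s hts hsL k rfl, htake, hclak]
  have hcl_ak : cl ((a k).take s ++ [M ((a k).take s)]) = k := by rw [htake, hclak]
  -- f k agrees on the two prefixes
  have hfk : f k (ahat.take s) = f k ((a k).take s) := by
    apply hdet
    · simp [hhat_len, hak_len]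
    · intro i
      rw [List.take_take, List.take_take]
      exact hhat_aligned k hk1 hkn (min i s)
    · intro i hx hy hcli
      have hix : i < s := by simpa [hhat_len, hsL.le] using hx
      have hix' : i < ahat.length := by omega
      have hiak : i < (a k).length := by omega
      have h1 : cl (ahat.take (i + 1)) = k := by
        rw [List.take_take, min_eq_left (by omega : i + 1 ≤ s)] at hcli
        exact hcli
      have := hhat_def i hix' k hk1 hkn h1 hiak
      simpa [List.getElem_take] using this
  have hdec_hat := hdecomp (ahat.take s) k hcl_hat
  have hdec_ak := hdecomp ((a k).take s) k hcl_ak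
  have hmid : (fun j : Fin k => f (j.val + 1) (ahat.take s))
      = fun j : Fin k =>
        if j.val + 1 = k then f k ((a k).take s) else f (j.val + 1) (ahat.take s) := by
    funext j
    by_cases h : j.val + 1 = k
    · simp [h, ← hfk]
    · simp [h]
  have : M (ahat.take s) = M ((a k).take s) := by
    rw [hdec_hat, hdec_ak, hmid, hlabel_g s hts hsL k rfl]
  rw [this, hrem']
  exact (hhat_def s hs k hk1 hkn rfl hsak).symm
end
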